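/- arXiv:0806.1360 — 2 statements merged into one kernel-verified Lean document; each statement's English description precedes it below -/
import Mathlib

section
/- Let T, E₂, E₃ : ℝ² → ℝ³ be smooth (C^∞) maps of (t,x) that are orthonormal at every point with E₃ = T × E₂, and let u₂, u₃ : ℝ² → ℝ be smooth functions satisfying the parallel-frame Frenet equations ∂_x T = u₂ E₂ + u₃ E₃, ∂_x E₂ = -u₂ T, ∂_x E₃ = -u₃ T at every (t,x). Suppose the tangent vector evolves by the +1 flow ∂_t T = -(∂_x u₃) E₂ + (∂_x u₂) E₃. Then T satisfies the Heisenberg ferromagnetic spin model ∂_t T = ∂_x( T × ∂_x T ) = T × ∂_x² T. -/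
/-!
Since `T` is a unit vector orthogonal to `E₂` and `E₃ = T × E₂`, crossing with `T` is a quarter
turn of the normal plane: `T × E₂ = E₃` and `T × E₃ = -E₂`. Hence `T × T_x = u₂ E₃ - u₃ E₂`,
whose `x`-derivative is `(u₂)_x E₃ - (u₃)_x E₂ = T_t`, the tangential terms `∓ u₂ u₃ T` from
`E₂ₓ, E₃ₓ` cancelling. Likewise `T_xx = (u₂)_x E₂ + (u₃)_x E₃ - |u|² T`, and crossing with `T`
kills the tangential part and turns the rest into the same vector `T_t`.
-/

noncomputable section

/-- Euclidean dot product on `ℝ³`. -/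
def dot3 (a b : Fin 3 → ℝ) : ℝ := a 0 * b 0 + a 1 * b 1 + a 2 * b 2

/-- Cross product on `ℝ³`. -/
def cross3 (a b : Fin 3 → ℝ) : Fin 3 → ℝ :=
  ![a 1 * b 2 - a 2 * b 1, a 2 * b 0 - a 0 * b 2, a 0 * b 1 - a 1 * b 0]

/-- Partial derivative with respect to the first variable `t`. -/
def pt {E : Type*} [NormedAddCommGroup E] [NormedSpace ℝ E]
    (f : ℝ × ℝ → E) : ℝ × ℝ → E := fun p => deriv (fun s => f (s, p.2)) p.1

/-- Partial derivative with respect to the second variable `x`. -/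
def px {E : Type*} [NormedAddCommGroup E] [NormedSpace ℝ E]
    (f : ℝ × ℝ → E) : ℝ × ℝ → E := fun p => deriv (fun s => f (p.1, s)) p.2

lemma cross3_add_right (a b c : Fin 3 → ℝ) :
    cross3 a (b + c) = cross3 a b + cross3 a c := by
  funext i; fin_cases i <;> simp [cross3] <;> ring

lemma cross3_sub_right (a b c : Fin 3 → ℝ) :
    cross3 a (b - c) = cross3 a b - cross3 a c := by
  funext i; fin_cases i <;> simp [cross3] <;> ring

lemma cross3_smul_right (a b : Fin 3 → ℝ) (c : ℝ) :
    cross3 a (c • b) = c • cross3 a b := by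
  funext i; fin_cases i <;> simp [cross3] <;> ring

lemma cross3_self (a : Fin 3 → ℝ) : cross3 a a = 0 := by
  funext i; fin_cases i <;> simp [cross3] <;> ring

lemma cross3_cross3 (a b : Fin 3 → ℝ) :
    cross3 a (cross3 a b) = dot3 a b • a - dot3 a a • b := by
  funext i; fin_cases i <;> simp [cross3, dot3] <;> ring

lemma cross3_smul_add_smul_of_orthonormal {t e₂ : Fin 3 → ℝ} (a b : ℝ) (ht : dot3 t t = 1)
    (hte₂ : dot3 t e₂ = 0) :
    cross3 t (a • e₂ + b • cross3 t e₂) = a • cross3 t e₂ - b • e₂ := by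
  rw [cross3_add_right, cross3_smul_right, cross3_smul_right, cross3_cross3, ht, hte₂]
  module

section PartialX

variable {E : Type*} [NormedAddCommGroup E] [NormedSpace ℝ E] {f g : ℝ × ℝ → E} {p : ℝ × ℝ}

lemma hasDerivAt_px (hf : DifferentiableAt ℝ f p) :
    HasDerivAt (fun s => f (p.1, s)) (px f p) p.2 :=
  (hf.comp p.2 ((differentiableAt_const _).prodMk differentiableAt_id)).hasDerivAt

lemma px_add (hf : DifferentiableAt ℝ f p) (hg : DifferentiableAt ℝ g p) :
    px (fun q => f q + g q) p = px f p + px g p :=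
  ((hasDerivAt_px hf).add (hasDerivAt_px hg)).deriv

lemma px_sub (hf : DifferentiableAt ℝ f p) (hg : DifferentiableAt ℝ g p) :
    px (fun q => f q - g q) p = px f p - px g p :=
  ((hasDerivAt_px hf).sub (hasDerivAt_px hg)).deriv

lemma px_smul {a : ℝ × ℝ → ℝ} (ha : DifferentiableAt ℝ a p) (hf : DifferentiableAt ℝ f p) :
    px (fun q => a q • f q) p = a p • px f p + px a p • f p :=
  ((hasDerivAt_px ha).smul (hasDerivAt_px hf)).deriv

end PartialX

section ParallelFrame

variable {T E₂ E₃ : ℝ × ℝ → Fin 3 → ℝ} {u₂ u₃ : ℝ × ℝ → ℝ} {p : ℝ × ℝ}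

lemma px_smul_add_smul_of_parallelFrame (hE₂ : DifferentiableAt ℝ E₂ p)
    (hE₃ : DifferentiableAt ℝ E₃ p) (hu₂ : DifferentiableAt ℝ u₂ p) (hu₃ : DifferentiableAt ℝ u₃ p)
    (hE₂x : px E₂ p = (-u₂ p) • T p) (hE₃x : px E₃ p = (-u₃ p) • T p) :
    px (fun q => u₂ q • E₂ q + u₃ q • E₃ q) p
      = px u₂ p • E₂ p + px u₃ p • E₃ p - (u₂ p ^ 2 + u₃ p ^ 2) • T p := by
  rw [px_add (by fun_prop) (by fun_prop), px_smul hu₂ hE₂, px_smul hu₃ hE₃,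
    hE₂x, hE₃x]
  module

lemma px_smul_sub_smul_of_parallelFrame (hE₂ : DifferentiableAt ℝ E₂ p)
    (hE₃ : DifferentiableAt ℝ E₃ p) (hu₂ : DifferentiableAt ℝ u₂ p) (hu₃ : DifferentiableAt ℝ u₃ p)
    (hE₂x : px E₂ p = (-u₂ p) • T p) (hE₃x : px E₃ p = (-u₃ p) • T p) :
    px (fun q => u₂ q • E₃ q - u₃ q • E₂ q) p = px u₂ p • E₃ p - px u₃ p • E₂ p := by
  rw [px_sub (by fun_prop) (by fun_prop), px_smul hu₂ hE₃, px_smul hu₃ hE₂,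
    hE₂x, hE₃x]
  module

end ParallelFrame

theorem plus_one_flow_heisenberg_model_general
    (T E₂ E₃ : ℝ × ℝ → Fin 3 → ℝ) (u₂ u₃ : ℝ × ℝ → ℝ)
    (hE₂ : ContDiff ℝ (⊤ : ℕ∞) E₂)
    (hE₃ : ContDiff ℝ (⊤ : ℕ∞) E₃)
    (hu₂ : ContDiff ℝ (⊤ : ℕ∞) u₂) (hu₃ : ContDiff ℝ (⊤ : ℕ∞) u₃)
    (horthTT : ∀ p, dot3 (T p) (T p) = 1)
    (horthT2 : ∀ p, dot3 (T p) (E₂ p) = 0)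
    (hE₃def : ∀ p, E₃ p = cross3 (T p) (E₂ p))
    (hTx : ∀ p, px T p = u₂ p • E₂ p + u₃ p • E₃ p)
    (hE₂x : ∀ p, px E₂ p = (-u₂ p) • T p)
    (hE₃x : ∀ p, px E₃ p = (-u₃ p) • T p)
    (hTt : ∀ p, pt T p = (-(px u₃ p)) • E₂ p + (px u₂ p) • E₃ p) :
    ∀ p, pt T p = px (fun q => cross3 (T q) (px T q)) p ∧
      pt T p = cross3 (T p) (px (px T) p) := by
  have dE₂ := hE₂.differentiable (by simp)
  have dE₃ := hE₃.differentiable (by simp)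
  have du₂ := hu₂.differentiable (by simp)
  have du₃ := hu₃.differentiable (by simp)
  have hTTx : (fun q => cross3 (T q) (px T q)) = fun q => u₂ q • E₃ q - u₃ q • E₂ q := by
    funext q
    rw [hTx, hE₃def, cross3_smul_add_smul_of_orthonormal _ _ (horthTT q) (horthT2 q)]
  intro p
  have hTxx : px (px T) p = px u₂ p • E₂ p + px u₃ p • E₃ p - (u₂ p ^ 2 + u₃ p ^ 2) • T p := by
    rw [show px T = _ from funext hTx]
    exact px_smul_add_smul_of_parallelFrame (dE₂ p) (dE₃ p) (du₂ p) (du₃ p) (hE₂x p) (hE₃x p)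
  refine ⟨?_, ?_⟩
  · rw [hTt, hTTx, px_smul_sub_smul_of_parallelFrame (dE₂ p) (dE₃ p) (du₂ p) (du₃ p) (hE₂x p) (hE₃x p)]
    module
  · rw [hTt, hTxx, cross3_sub_right, cross3_smul_right, cross3_self, hE₃def,
      cross3_smul_add_smul_of_orthonormal _ _ (horthTT p) (horthT2 p)]
    module

/-- In a parallel frame, the +1 flow `T_t = -(u₃)_x E₂ + (u₂)_x E₃` yields the
Heisenberg ferromagnetic spin model `T_t = (T × T_x)_x = T × T_xx`. -/
theorem plus_one_flow_heisenberg_model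
    (T E₂ E₃ : ℝ × ℝ → Fin 3 → ℝ) (u₂ u₃ : ℝ × ℝ → ℝ)
    (hT : ContDiff ℝ (⊤ : ℕ∞) T) (hE₂ : ContDiff ℝ (⊤ : ℕ∞) E₂)
    (hE₃ : ContDiff ℝ (⊤ : ℕ∞) E₃)
    (hu₂ : ContDiff ℝ (⊤ : ℕ∞) u₂) (hu₃ : ContDiff ℝ (⊤ : ℕ∞) u₃)
    (horthTT : ∀ p, dot3 (T p) (T p) = 1)
    (horth22 : ∀ p, dot3 (E₂ p) (E₂ p) = 1)
    (horth33 : ∀ p, dot3 (E₃ p) (E₃ p) = 1)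
    (horthT2 : ∀ p, dot3 (T p) (E₂ p) = 0)
    (horthT3 : ∀ p, dot3 (T p) (E₃ p) = 0)
    (horth23 : ∀ p, dot3 (E₂ p) (E₃ p) = 0)
    (hE₃def : ∀ p, E₃ p = cross3 (T p) (E₂ p))
    (hTx : ∀ p, px T p = u₂ p • E₂ p + u₃ p • E₃ p)
    (hE₂x : ∀ p, px E₂ p = (-u₂ p) • T p)
    (hE₃x : ∀ p, px E₃ p = (-u₃ p) • T p)
    (hTt : ∀ p, pt T p = (-(px u₃ p)) • E₂ p + (px u₂ p) • E₃ p) :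
    ∀ p, pt T p = px (fun q => cross3 (T q) (px T q)) p ∧
      pt T p = cross3 (T p) (px (px T) p) :=
  plus_one_flow_heisenberg_model_general T E₂ E₃ u₂ u₃ hE₂ hE₃ hu₂ hu₃ horthTT horthT2 hE₃def hTx
    hE₂x hE₃x hTt
end
end

section
/- Let S : ℝ² → ℝ³ be a smooth (C^∞) map of (t,x) with |S(t,x)| = 1 for all (t,x), satisfying the SO(3)-invariant mKdV spin model ∂_t S = -( ∂_x³ S + (3/2) ∂_x( |∂_x S|² S ) ). Then the energy density obeys the local conservation law ∂_t( (1/2)|∂_x S|² ) = ∂_x( (1/2)|∂_x² S|² - ∂_x S · ∂_x³ S - (15/8)|∂_x S|⁴ ) at every point; consequently ∫ (1/2)|S_x|² dx is a constant of motion under suitable boundary conditions. -/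
/-!
Write `u = S_x` and `e = |u|²`. Since mixed partials commute, `∂_t (e/2) = u · ∂_x S_t`, and the
flow equation turns this into a statement about the single curve `x ↦ S(t, x)`. There
`|S| = 1` gives `S · u = 0`, so from `(e S)_xx = e_xx S + 2 e_x u + e u_x` we get
`u · (e S)_xx = (5/2) e e_x = ∂_x (5/4 e²)`, while `u · u_xxx = ∂_x (u · u_xx - |u_x|²/2)`.
-/

noncomputable section

/-- Euclidean norm on `ℝ³`. -/
def norm3 (a : Fin 3 → ℝ) : ℝ := Real.sqrt (dot3 a a)

section PartialDerivatives

variable {E : Type*} [NormedAddCommGroup E] [NormedSpace ℝ E] {f : ℝ × ℝ → E} {p : ℝ × ℝ}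

theorem pt_eq_fderiv (hf : DifferentiableAt ℝ f p) : pt f p = fderiv ℝ f p (1, 0) :=
  (hf.hasFDerivAt.comp_hasDerivAt p.1
    ((hasDerivAt_id p.1).prodMk (hasDerivAt_const p.1 p.2))).deriv

theorem px_eq_fderiv (hf : DifferentiableAt ℝ f p) : px f p = fderiv ℝ f p (0, 1) :=
  (hf.hasFDerivAt.comp_hasDerivAt p.2
    ((hasDerivAt_const p.2 p.1).prodMk (hasDerivAt_id p.2))).deriv

theorem hasDerivAt_pt (hf : DifferentiableAt ℝ f p) :
    HasDerivAt (fun s => f (s, p.2)) (pt f p) p.1 :=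
  (hf.comp p.1 (differentiableAt_id.prodMk (differentiableAt_const p.2))).hasDerivAt

theorem contDiff_px {n : WithTop ℕ∞} (hf : ContDiff ℝ (n + 1) f) : ContDiff ℝ n (px f) := by
  have hpx : px f = fun q => fderiv ℝ f q (0, 1) :=
    funext fun q => px_eq_fderiv (hf.differentiable (by simp) q)
  rw [hpx]
  exact (hf.fderiv_right le_rfl).clm_apply contDiff_const

theorem fderiv_fderiv_apply {F : Type*} [NormedAddCommGroup F] [NormedSpace ℝ F]
    {g : F → E} {y : F} (hg : DifferentiableAt ℝ (fderiv ℝ g) y) (v w : F) :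
    fderiv ℝ (fun z => fderiv ℝ g z v) y w = fderiv ℝ (fderiv ℝ g) y w v := by
  rw [fderiv_clm_apply hg (differentiableAt_const v)]
  simp

theorem pt_px_comm (hf : ContDiff ℝ 2 f) (p : ℝ × ℝ) : pt (px f) p = px (pt f) p := by
  have hf₁ : Differentiable ℝ f := hf.differentiable two_ne_zero
  have hf₂ : Differentiable ℝ (fderiv ℝ f) :=
    (hf.fderiv_right (m := 1) le_rfl).differentiable one_ne_zero
  have hpx : px f = fun q => fderiv ℝ f q (0, 1) := funext fun q => px_eq_fderiv (hf₁ q)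
  have hpt : pt f = fun q => fderiv ℝ f q (1, 0) := funext fun q => pt_eq_fderiv (hf₁ q)
  rw [hpx, hpt, pt_eq_fderiv ((hf₂ p).clm_apply (differentiableAt_const _)),
    px_eq_fderiv ((hf₂ p).clm_apply (differentiableAt_const _)),
    fderiv_fderiv_apply (hf₂ p), fderiv_fderiv_apply (hf₂ p)]
  exact (hf.contDiffAt.isSymmSndFDerivAt (by simp)) _ _

end PartialDerivatives

theorem norm3_sq (a : Fin 3 → ℝ) : norm3 a ^ 2 = dot3 a a :=
  Real.sq_sqrt <|
    add_nonneg (add_nonneg (mul_self_nonneg _) (mul_self_nonneg _)) (mul_self_nonneg _)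

theorem norm3_pow_four (a : Fin 3 → ℝ) : norm3 a ^ 4 = dot3 a a ^ 2 := by
  rw [← norm3_sq]; ring

theorem HasDerivAt.dot3 {f g : ℝ → Fin 3 → ℝ} {f' g' : Fin 3 → ℝ} {x : ℝ}
    (hf : HasDerivAt f f' x) (hg : HasDerivAt g g' x) :
    HasDerivAt (fun s => dot3 (f s) (g s)) (dot3 f' (g x) + dot3 (f x) g') x := by
  have hfi := hasDerivAt_pi.1 hf
  have hgi := hasDerivAt_pi.1 hg
  refine ((((hfi 0).mul (hgi 0)).add ((hfi 1).mul (hgi 1))).add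
    ((hfi 2).mul (hgi 2))).congr_deriv ?_
  simp only [_root_.dot3]; ring

theorem pt_half_norm3_sq {g : ℝ × ℝ → Fin 3 → ℝ} {p : ℝ × ℝ} (hg : DifferentiableAt ℝ g p) :
    pt (fun q => (1 / 2) * norm3 (g q) ^ 2) p = dot3 (g p) (pt g p) := by
  simp only [norm3_sq]
  exact (((hasDerivAt_pt hg).dot3 (hasDerivAt_pt hg)).const_mul (1 / 2 : ℝ)).deriv.trans
    (by simp only [dot3]; ring)

theorem dot3_deriv_eq_zero_of_norm3_eq {γ : ℝ → Fin 3 → ℝ} {r x : ℝ}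
    (hγ : DifferentiableAt ℝ γ x) (h : ∀ s, norm3 (γ s) = r) : dot3 (γ x) (deriv γ x) = 0 := by
  have hconst : HasDerivAt (fun s => dot3 (γ s) (γ s)) 0 x := by
    simp only [← norm3_sq, h]
    exact hasDerivAt_const x _
  have := (hγ.hasDerivAt.dot3 hγ.hasDerivAt).unique hconst
  simp only [dot3] at this ⊢
  linarith

theorem ContDiff.hasDerivAt_iterate_deriv {F : Type*} [NormedAddCommGroup F] [NormedSpace ℝ F]
    {f : ℝ → F} {n : WithTop ℕ∞} {k : ℕ} (hf : ContDiff ℝ n f) (hk : k < n) (x : ℝ) :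
    HasDerivAt (deriv^[k] f) (deriv^[k + 1] f x) x := by
  rw [Function.iterate_succ_apply', ← iteratedDeriv_eq_iterate]
  exact (hf.differentiable_iteratedDeriv k hk x).hasDerivAt

section Curve

variable (γ : ℝ → Fin 3 → ℝ)

def mkdvVelocity (s : ℝ) : Fin 3 → ℝ :=
  -(deriv^[3] γ s + (3 / 2 : ℝ) • deriv (fun r => norm3 (deriv γ r) ^ 2 • γ r) s)

def mkdvEnergyFlux (s : ℝ) : ℝ :=
  (1 / 2) * norm3 (deriv^[2] γ s) ^ 2 - dot3 (deriv γ s) (deriv^[3] γ s)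
    - (15 / 8) * norm3 (deriv γ s) ^ 4

variable {γ}

theorem deriv_mkdvEnergyFlux (hγ : ContDiff ℝ 4 γ) {x : ℝ}
    (horth : dot3 (γ x) (deriv γ x) = 0) :
    deriv (mkdvEnergyFlux γ) x = dot3 (deriv γ x) (deriv (mkdvVelocity γ) x) := by
  have d₀ : ∀ s, HasDerivAt γ (deriv γ s) s := hγ.hasDerivAt_iterate_deriv (k := 0) (by norm_num)
  have d₁ : ∀ s, HasDerivAt (deriv γ) (deriv^[2] γ s) s :=
    hγ.hasDerivAt_iterate_deriv (k := 1) (by norm_num)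
  have d₂ : ∀ s, HasDerivAt (deriv^[2] γ) (deriv^[3] γ s) s :=
    hγ.hasDerivAt_iterate_deriv (k := 2) (by norm_num)
  have d₃ : ∀ s, HasDerivAt (deriv^[3] γ) (deriv^[4] γ s) s :=
    hγ.hasDerivAt_iterate_deriv (k := 3) (by norm_num)
  have he : ∀ s, HasDerivAt (fun r => dot3 (deriv γ r) (deriv γ r))
      (2 * dot3 (deriv γ s) (deriv^[2] γ s)) s := fun s =>
    ((d₁ s).dot3 (d₁ s)).congr_deriv (by simp only [dot3]; ring)
  have he' : ∀ s, HasDerivAt (fun r => 2 * dot3 (deriv γ r) (deriv^[2] γ r))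
      (2 * (dot3 (deriv^[2] γ s) (deriv^[2] γ s) + dot3 (deriv γ s) (deriv^[3] γ s))) s :=
    fun s => ((d₁ s).dot3 (d₂ s)).const_mul 2
  have hm : deriv (fun r => norm3 (deriv γ r) ^ 2 • γ r)
      = fun r => dot3 (deriv γ r) (deriv γ r) • deriv γ r
          + (2 * dot3 (deriv γ r) (deriv^[2] γ r)) • γ r := by
    simp only [norm3_sq]
    exact funext fun r => ((he r).smul (d₀ r)).deriv
  have hvel : deriv (mkdvVelocity γ) x = -(deriv^[4] γ x + (3 / 2 : ℝ) •
      (dot3 (deriv γ x) (deriv γ x) • deriv^[2] γ x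
        + (4 * dot3 (deriv γ x) (deriv^[2] γ x)) • deriv γ x
        + (2 * (dot3 (deriv^[2] γ x) (deriv^[2] γ x) + dot3 (deriv γ x) (deriv^[3] γ x))) • γ x))
      := by
    unfold mkdvVelocity
    rw [hm]
    exact ((d₃ x).add ((((he x).smul (d₁ x)).add ((he' x).smul (d₀ x))).const_smul
      (3 / 2 : ℝ))).neg.deriv.trans (by module)
  have hflux : deriv (mkdvEnergyFlux γ) x = -dot3 (deriv γ x) (deriv^[4] γ x)
      - (15 / 2) * dot3 (deriv γ x) (deriv γ x) * dot3 (deriv γ x) (deriv^[2] γ x) := by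
    unfold mkdvEnergyFlux
    simp only [norm3_sq, norm3_pow_four]
    exact (((((d₂ x).dot3 (d₂ x)).const_mul (1 / 2 : ℝ)).sub ((d₁ x).dot3 (d₃ x))).sub
      ((((d₁ x).dot3 (d₁ x)).pow 2).const_mul (15 / 8 : ℝ))).deriv.trans
      (by simp only [dot3]; ring)
  rw [hvel, hflux]
  -- `γ ⟂ γ'` kills the `γ`-component of `(|γ'|² γ)''`; the rest is an exact derivative.
  linear_combination (norm := skip) (3 * (dot3 (deriv^[2] γ x) (deriv^[2] γ x)
    + dot3 (deriv γ x) (deriv^[3] γ x))) * horth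
  simp only [dot3, Pi.add_apply, Pi.neg_apply, Pi.smul_apply, smul_eq_mul]
  ring

end Curve

/-- Local conservation law of the energy density for the SO(3)-invariant
mKdV spin model `S_t = -(S_xxx + (3/2)(|S_x|²S)_x)`. -/
theorem mkdv_spin_energy_conservation
    (S : ℝ × ℝ → Fin 3 → ℝ)
    (hS : ContDiff ℝ (⊤ : ℕ∞) S)
    (hunit : ∀ p, norm3 (S p) = 1)
    (hflow : ∀ p, pt S p
      = -(px (px (px S)) p
          + (3 / 2 : ℝ) • px (fun q => (norm3 (px S q)) ^ 2 • S q) p)) :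
    ∀ p, pt (fun q => (1 / 2) * (norm3 (px S q)) ^ 2) p
      = px (fun q => (1 / 2) * (norm3 (px (px S) q)) ^ 2
          - dot3 (px S q) (px (px (px S)) q)
          - (15 / 8) * (norm3 (px S q)) ^ 4) p := by
  rintro ⟨t, x⟩
  have hS₂ : ContDiff ℝ 2 S := hS.of_le (WithTop.coe_le_coe.mpr le_top)
  have hγ : ContDiff ℝ 4 (fun s => S (t, s)) :=
    (hS.of_le (WithTop.coe_le_coe.mpr le_top)).comp (contDiff_const.prodMk contDiff_id)
  have horth : dot3 (S (t, x)) (px S (t, x)) = 0 :=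
    dot3_deriv_eq_zero_of_norm3_eq (hγ.differentiable (by norm_num) x) fun s => hunit (t, s)
  have hvel : (fun s => pt S (t, s)) = mkdvVelocity (fun s => S (t, s)) :=
    funext fun s => hflow (t, s)
  calc pt (fun q => (1 / 2) * (norm3 (px S q)) ^ 2) (t, x)
      = dot3 (px S (t, x)) (pt (px S) (t, x)) :=
        pt_half_norm3_sq ((contDiff_px (n := 1) hS₂).differentiable one_ne_zero _)
    _ = dot3 (px S (t, x)) (deriv (fun s => pt S (t, s)) x) := by rw [pt_px_comm hS₂]; rfl
    _ = dot3 (px S (t, x)) (deriv (mkdvVelocity fun s => S (t, s)) x) := by rw [hvel]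
    _ = _ := (deriv_mkdvEnergyFlux hγ horth).symm
end
end
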